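/- In the interpretability logic IL, the principle R_{2n+2} implies R_{2n+1}; specifically, substituting C_{n+1} := ⊤ and B_{n+1} := A_{n+1} in R_{2n+2} yields R_{2n+1} (using that IL proves A ▷ A and that □⊤ is provable). -/

import Mathlib

/-- Formulas of interpretability logic: propositional variables, ⊥, →, □, ▷. -/
inductive ILForm : Type
  | var : ℕ → ILForm
  | bot : ILForm
  | impl : ILForm → ILForm → ILForm
  | box : ILForm → ILForm
  | rhd : ILForm → ILForm → ILForm
  deriving DecidableEq

namespace ILForm

def neg (A : ILForm) : ILForm := impl A bot
def top : ILForm := neg bot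
def conj (A B : ILForm) : ILForm := neg (impl A (neg B))
def disj (A B : ILForm) : ILForm := impl (neg A) B
def dia (A : ILForm) : ILForm := neg (box (neg A))

end ILForm

infixr:30 " ⟹ " => ILForm.impl
infixl:65 " ⋀ " => ILForm.conj
infixl:64 " ⋁ " => ILForm.disj
infix:50 " ▷ " => ILForm.rhd
prefix:70 "□" => ILForm.box
prefix:70 "◇" => ILForm.dia
prefix:70 "∼" => ILForm.neg

/-- Propositional evaluation of a formula, treating boxed and ▷-formulas
(and variables) as atoms evaluated by `g`.  A formula is an instance of a
propositional tautology iff it evaluates to `true` under every such `g`. -/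
def ILForm.evalProp (g : ILForm → Bool) : ILForm → Bool
  | .bot => false
  | .impl a b => !(ILForm.evalProp g a) || ILForm.evalProp g b
  | f => g f

/-- Hilbert-style provability in the interpretability logic IL extended with
an additional set `Ax` of axioms. -/
inductive ILProv (Ax : Set ILForm) : ILForm → Prop
  | ax {A : ILForm} : A ∈ Ax → ILProv Ax A
  | taut {A : ILForm} : (∀ g : ILForm → Bool, A.evalProp g = true) → ILProv Ax A
  | L1 (A B : ILForm) : ILProv Ax ((□(A ⟹ B)) ⟹ ((□A) ⟹ (□B)))
  | L2 (A : ILForm) : ILProv Ax ((□A) ⟹ (□□A))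
  | L3 (A : ILForm) : ILProv Ax ((□((□A) ⟹ A)) ⟹ (□A))
  | J1 (A B : ILForm) : ILProv Ax ((□(A ⟹ B)) ⟹ (A ▷ B))
  | J2 (A B C : ILForm) : ILProv Ax (((A ▷ B) ⋀ (B ▷ C)) ⟹ (A ▷ C))
  | J3 (A B C : ILForm) : ILProv Ax (((A ▷ C) ⋀ (B ▷ C)) ⟹ ((A ⋁ B) ▷ C))
  | J4 (A B : ILForm) : ILProv Ax ((A ▷ B) ⟹ ((◇A) ⟹ (◇B)))
  | J5 (A : ILForm) : ILProv Ax ((◇A) ▷ A)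
  | mp {A B : ILForm} : ILProv Ax (A ⟹ B) → ILProv Ax A → ILProv Ax B
  | nec {A : ILForm} : ILProv Ax A → ILProv Ax (□A)

/-- Substitution of formulas for propositional variables. -/
def ILForm.substVar (σ : ℕ → ILForm) : ILForm → ILForm
  | .var n => σ n
  | .bot => .bot
  | .impl a b => .impl (ILForm.substVar σ a) (ILForm.substVar σ b)
  | .box a => .box (ILForm.substVar σ a)
  | .rhd a b => .rhd (ILForm.substVar σ a) (ILForm.substVar σ b)

/-- All substitution instances of a modal scheme. -/
def instancesOf (A : ILForm) : Set ILForm := {B | ∃ σ : ℕ → ILForm, B = ILForm.substVar σ A}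

/-- Helper for simultaneous replacement of subformula occurrences. -/
def ILForm.hit (ps : List (ILForm × ILForm)) (f : ILForm) : Option ILForm :=
  (ps.find? fun pq => decide (pq.1 = f)).map (·.2)

/-- Simultaneous replacement of (outermost) occurrences of the patterns
`p` by the corresponding `q`, for `(p,q)` in the list `ps`. -/
def ILForm.replL (ps : List (ILForm × ILForm)) : ILForm → ILForm
  | .var n => (ILForm.hit ps (.var n)).getD (.var n)
  | .bot => (ILForm.hit ps .bot).getD .bot
  | .impl a b =>
      (ILForm.hit ps (.impl a b)).getD (.impl (ILForm.replL ps a) (ILForm.replL ps b))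
  | .box a => (ILForm.hit ps (.box a)).getD (.box (ILForm.replL ps a))
  | .rhd a b =>
      (ILForm.hit ps (.rhd a b)).getD (.rhd (ILForm.replL ps a) (ILForm.replL ps b))

/-- The placeholder variables `A_n`, `B_n`, `C_n`, `E_n`. -/
def Av (n : ℕ) : ILForm := .var (4*n)
def Bv (n : ℕ) : ILForm := .var (4*n+1)
def Cv (n : ℕ) : ILForm := .var (4*n+2)
def Ev (n : ℕ) : ILForm := .var (4*n+3)

/-- The slim series `R_n`, defined by the substitutions of the paper:
`R_0 := A_0▷B_0 → ¬(A_0▷¬C_0) ▷ B_0∧□C_0`;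
`R_{2n+1} := R_{2n}[¬(A_n▷¬C_n)/¬(A_n▷¬C_n)∧(E_{n+1}▷◇A_{n+1});
                    B_n∧□C_n/B_n∧□C_n∧(E_{n+1}▷A_{n+1})]`;
`R_{2n+2} := R_{2n+1}[B_n/B_n∧(A_{n+1}▷B_{n+1}); ◇A_{n+1}/¬(A_{n+1}▷¬C_{n+1});
     (E_{n+1}▷A_{n+1})/(E_{n+1}▷A_{n+1})∧(E_{n+1}▷B_{n+1}∧□C_{n+1})]`. -/
def Rser : ℕ → ILForm
  | 0 => (Av 0 ▷ Bv 0) ⟹ ((∼(Av 0 ▷ (∼(Cv 0)))) ▷ ((Bv 0) ⋀ (□(Cv 0))))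
  | n+1 =>
    let k := n / 2
    if n % 2 = 0 then
      ILForm.replL
        [ (∼(Av k ▷ (∼(Cv k))), (∼(Av k ▷ (∼(Cv k)))) ⋀ (Ev (k+1) ▷ (◇(Av (k+1))))),
          ((Bv k) ⋀ (□(Cv k)), ((Bv k) ⋀ (□(Cv k))) ⋀ (Ev (k+1) ▷ Av (k+1))) ]
        (Rser n)
    else
      ILForm.replL
        [ (Bv k, (Bv k) ⋀ (Av (k+1) ▷ Bv (k+1))),
          (◇(Av (k+1)), ∼(Av (k+1) ▷ (∼(Cv (k+1))))),
          (Ev (k+1) ▷ Av (k+1),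
            (Ev (k+1) ▷ Av (k+1)) ⋀ (Ev (k+1) ▷ ((Bv (k+1)) ⋀ (□(Cv (k+1)))))) ]
        (Rser n)

/-- The formulas `X_n` of the well-behaved subhierarchy. -/
def Xt (A B : ℕ → ILForm) : ℕ → ILForm
  | 0 => A 0 ▷ B 0
  | n+1 => A (n+1) ▷ ((B (n+1)) ⋀ (Xt A B n))

/-- The formulas `Y_n` of the well-behaved subhierarchy. -/
def Yt (A C E : ℕ → ILForm) : ℕ → ILForm
  | 0 => ∼(A 0 ▷ (∼(C 0)))
  | n+1 => (∼(A (n+1) ▷ (∼(C (n+1))))) ⋀ (E (n+1) ▷ (Yt A C E n))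

/-- The formulas `Z_n` of the well-behaved subhierarchy. -/
def Zt (A B C E : ℕ → ILForm) : ℕ → ILForm
  | 0 => (B 0) ⋀ (□(C 0))
  | n+1 => (((B (n+1)) ⋀ (Xt A B n)) ⋀ (□(C (n+1)))) ⋀
             ((E (n+1) ▷ A n) ⋀ (E (n+1) ▷ (Zt A B C E n)))

/-- The principles `R̃_n = X_n → Y_n ▷ Z_n`. -/
def Rtilde (A B C E : ℕ → ILForm) (n : ℕ) : ILForm :=
  (Xt A B n) ⟹ ((Yt A C E n) ▷ (Zt A B C E n))

/-- `X_{k-1}`, with the convention `X_{-1} = ⊤`. -/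
def Xminus (A B : ℕ → ILForm) : ℕ → ILForm
  | 0 => ILForm.top
  | n+1 => Xt A B n

/-- `A_{k-1}`, with the convention `A_{-1} = ⊤`. -/
def Aminus (A : ℕ → ILForm) : ℕ → ILForm
  | 0 => ILForm.top
  | n+1 => A n

/-- `Z_{k-1}`, with the convention `Z_{-1} = ⊤`. -/
def Zminus (A B C E : ℕ → ILForm) : ℕ → ILForm
  | 0 => ILForm.top
  | n+1 => Zt A B C E n

/-- Veltman frames. -/
structure Veltman where
  W : Type
  ne : Nonempty W
  R : W → W → Prop
  S : W → W → W → Prop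
  R_trans : ∀ {x y z}, R x y → R y z → R x z
  R_cwf : WellFounded (fun x y => R y x)
  S_dom : ∀ {x y z}, S x y z → R x y ∧ R x z
  S_refl : ∀ {x y}, R x y → S x y y
  S_trans : ∀ {x y z u}, S x y z → S x z u → S x y u
  R_sub_S : ∀ {x y z}, R x y → R y z → S x y z

/-- Forcing in a Veltman model. -/
def force (F : Veltman) (V : ℕ → F.W → Prop) : ILForm → F.W → Prop
  | .var n => fun w => V n w
  | .bot => fun _ => False
  | .impl a b => fun w => force F V a w → force F V b w
  | .box a => fun w => ∀ v, F.R w v → force F V a v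
  | .rhd a b => fun w => ∀ v, F.R w v → force F V a v →
      ∃ u, F.S w v u ∧ force F V b u

/-- A formula is valid on a frame if it is forced at every world under every valuation. -/
def valid (F : Veltman) (A : ILForm) : Prop := ∀ (V : ℕ → F.W → Prop) (w : F.W), force F V A w

/-- The `C`-assuring successor relation `x R^C_⊩ y`. -/
def RC (F : Veltman) (V : ℕ → F.W → Prop) (C : ILForm) (x y : F.W) : Prop :=
  F.R x y ∧ force F V C y ∧ ∀ z, F.S x y z → force F V C z

/-- The ternary relations `G_n` on a Veltman frame. -/
def G (F : Veltman) : ℕ → F.W → F.W → F.W → Prop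
  | 0 => fun x y z => ∀ u, F.R z u → F.S x y u
  | n+1 => fun x y z => ∀ u, F.R z u → F.S x y u ∧ ∀ v, F.S x u v → G F n z u v

/-- The frame conditions `F_n` of the slim hierarchy. -/
def Fcond (F : Veltman) (n : ℕ) : Prop :=
  ∀ w x y z, F.R w x → F.R x y → F.S w y z → G F n x y z

/-- The quaternary relations `B_n` on a Veltman frame. -/
def Bq (F : Veltman) : ℕ → F.W → F.W → F.W → F.W → Prop
  | 0 => fun x1 x0 y0 y1 => F.R x1 x0 ∧ F.R x0 y0 ∧ F.S x1 y0 y1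
  | n+1 => fun x' x0 y0 y' => ∃ xn yn, F.R x' xn ∧ Bq F n xn x0 y0 yn ∧ F.S x' yn y'

/-- The formulas `U_n` of the broad series (with `U_0 := ⊤`, unused). -/
def Ubr (C : ILForm) (D : ℕ → ILForm) : ℕ → ILForm
  | 0 => ILForm.top
  | 1 => ◇(∼(D 1 ▷ (∼C)))
  | n+2 => ◇(((D (n+1)) ▷ (D (n+2))) ⋀ (Ubr C D (n+1)))

/-- The frame conditions `F^n` of the broad series. -/
def FbroadCond (F : Veltman) (n : ℕ) : Prop :=
  ∀ x1 x0 y0 y1, Bq F n x1 x0 y0 y1 → ∀ u, F.R y1 u → F.S x0 y0 u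

/-- The principles `R^n` of the broad series. -/
def Rbroad (A B C : ILForm) (D : ℕ → ILForm) : ℕ → ILForm
  | 0 => (A ▷ B) ⟹ ((∼(A ▷ (∼C))) ▷ (B ⋀ (□C)))
  | n+1 => (A ▷ B) ⟹ (((Ubr C D (n+1)) ⋀ (D (n+1) ▷ A)) ▷ (B ⋀ (□C)))

/-!
Substituting `B_{n+1} := A_{n+1}` and `C_{n+1} := ⊤` in `R_{2n+2}` leaves `R_{2n+1}` itself
untouched, since it mentions neither variable. So the instance is `R_{2n+1}` with the three
replacements of the step `2n+1 ↦ 2n+2` specialised: `B_n` becomes `B_n ∧ (A_{n+1} ▷ A_{n+1})`,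
`◇A_{n+1}` becomes `¬(A_{n+1} ▷ ¬⊤)`, and `E_{n+1} ▷ A_{n+1}` acquires the conjunct
`E_{n+1} ▷ A_{n+1} ∧ □⊤`. Each is IL-equivalent to what it replaces (by `A ▷ A`, by J1 and J4,
and by `⊢ □⊤`), and provable equivalence is a congruence for `→`, `□` and `▷`, so the instance
is equivalent to `R_{2n+1}`.
-/

namespace ILProv

variable {Ax : Set ILForm} {A A' B B' C : ILForm}

theorem mp₂ (h : ILProv Ax (A ⟹ B ⟹ C)) (hA : ILProv Ax A) (hB : ILProv Ax B) :
    ILProv Ax C :=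
  (h.mp hA).mp hB

theorem imp_refl (A : ILForm) : ILProv Ax (A ⟹ A) :=
  .taut fun _ => by simp only [ILForm.evalProp]; grind

theorem imp_trans (hAB : ILProv Ax (A ⟹ B)) (hBC : ILProv Ax (B ⟹ C)) : ILProv Ax (A ⟹ C) :=
  mp₂ (.taut fun _ => by simp only [ILForm.evalProp]; grind) hAB hBC

theorem imp_of_and_imp_left (hA : ILProv Ax A) (h : ILProv Ax (A ⋀ B ⟹ C)) :
    ILProv Ax (B ⟹ C) :=
  mp₂ (.taut fun _ => by simp only [ILForm.evalProp, ILForm.conj, ILForm.neg]; grind) hA h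

theorem imp_of_and_imp_right (hB : ILProv Ax B) (h : ILProv Ax (A ⋀ B ⟹ C)) :
    ILProv Ax (A ⟹ C) :=
  mp₂ (.taut fun _ => by simp only [ILForm.evalProp, ILForm.conj, ILForm.neg]; grind) hB h

theorem top : ILProv Ax ILForm.top :=
  .taut fun _ => rfl

theorem box_mono (h : ILProv Ax (A ⟹ B)) : ILProv Ax (□A ⟹ □B) :=
  .mp (.L1 A B) (.nec h)

theorem rhd_of_imp (h : ILProv Ax (A ⟹ B)) : ILProv Ax (A ▷ B) :=
  .mp (.J1 A B) (.nec h)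

theorem rhd_refl (A : ILForm) : ILProv Ax (A ▷ A) :=
  rhd_of_imp (imp_refl A)

theorem rhd_mono_left (h : ILProv Ax (A' ⟹ A)) : ILProv Ax ((A ▷ B) ⟹ (A' ▷ B)) :=
  imp_of_and_imp_left (rhd_of_imp h) (.J2 A' A B)

theorem rhd_mono_right (h : ILProv Ax (B ⟹ B')) : ILProv Ax ((A ▷ B) ⟹ (A ▷ B')) :=
  imp_of_and_imp_right (rhd_of_imp h) (.J2 A B B')

end ILProv

def ILEquiv (Ax : Set ILForm) (A B : ILForm) : Prop :=
  ILProv Ax (A ⟹ B) ∧ ILProv Ax (B ⟹ A)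

namespace ILEquiv

open ILProv

variable {Ax : Set ILForm} {A A' B B' : ILForm}

theorem refl (A : ILForm) : ILEquiv Ax A A :=
  ⟨imp_refl A, imp_refl A⟩

theorem impl_congr (hA : ILEquiv Ax A A') (hB : ILEquiv Ax B B') :
    ILEquiv Ax (A ⟹ B) (A' ⟹ B') :=
  have hmono : ∀ X X' Y Y' : ILForm, ILProv Ax ((X' ⟹ X) ⟹ (Y ⟹ Y') ⟹ (X ⟹ Y) ⟹ (X' ⟹ Y')) :=
    fun _ _ _ _ => .taut fun _ => by simp only [ILForm.evalProp]; grind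
  ⟨mp₂ (hmono _ _ _ _) hA.2 hB.1, mp₂ (hmono _ _ _ _) hA.1 hB.2⟩

theorem box_congr (h : ILEquiv Ax A B) : ILEquiv Ax (□A) (□B) :=
  ⟨box_mono h.1, box_mono h.2⟩

theorem rhd_congr (hA : ILEquiv Ax A A') (hB : ILEquiv Ax B B') :
    ILEquiv Ax (A ▷ B) (A' ▷ B') :=
  ⟨imp_trans (rhd_mono_left hA.2) (rhd_mono_right hB.1),
    imp_trans (rhd_mono_left hA.1) (rhd_mono_right hB.2)⟩

theorem and_right_of_imp (h : ILProv Ax (A ⟹ B)) : ILEquiv Ax A (A ⋀ B) :=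
  ⟨.mp (.taut fun _ => by simp only [ILForm.evalProp, ILForm.conj, ILForm.neg]; grind) h,
    .taut fun _ => by simp only [ILForm.evalProp, ILForm.conj, ILForm.neg]; grind⟩

theorem and_right_of_prov (h : ILProv Ax B) : ILEquiv Ax A (A ⋀ B) :=
  and_right_of_imp (.mp (.taut fun _ => by simp only [ILForm.evalProp]; grind) h)

theorem dia_rhd_neg_top (A : ILForm) : ILEquiv Ax (◇A) (∼(A ▷ ∼ILForm.top)) := by
  have hbot : ILProv Ax (∼(◇(∼ILForm.top))) :=
    .mp (.taut fun _ => by simp only [ILForm.evalProp, ILForm.dia, ILForm.neg]; grind)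
      (.nec (.taut fun _ => rfl) : ILProv Ax (□(∼(∼ILForm.top))))
  have hbox : ILProv Ax (□(∼A) ⟹ (A ▷ ∼ILForm.top)) :=
    imp_trans
      (box_mono (.taut fun _ => by simp only [ILForm.evalProp, ILForm.neg, ILForm.top]; grind))
      (.J1 A (∼ILForm.top))
  exact ⟨mp₂ (.taut fun _ => by simp only [ILForm.evalProp, ILForm.neg]; grind)
      (.J4 A (∼ILForm.top)) hbot,
    .mp (.taut fun _ => by simp only [ILForm.evalProp, ILForm.dia, ILForm.neg]; grind) hbox⟩

end ILEquiv

namespace ILForm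

variable {ps : List (ILForm × ILForm)} {f q : ILForm} {σ : ℕ → ILForm}

theorem mem_of_hit_eq_some (h : hit ps f = some q) : (f, q) ∈ ps := by
  obtain ⟨pq, hfind, rfl⟩ := Option.map_eq_some_iff.1 h
  have hf : pq.1 = f := by simpa using List.find?_some hfind
  exact hf ▸ List.mem_of_find?_eq_some hfind

theorem hit_map_snd (g : ILForm → ILForm) (ps : List (ILForm × ILForm)) (f : ILForm) :
    hit (ps.map fun pq => (pq.1, g pq.2)) f = (hit ps f).map g := by
  simp [hit, List.find?_map, Option.map_map, Function.comp_def]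

theorem substVar_replL (hf : f.substVar σ = f) :
    (replL ps f).substVar σ = replL (ps.map fun pq => (pq.1, pq.2.substVar σ)) f := by
  induction f <;> rw [replL, replL, hit_map_snd, ← Option.getD_map (substVar σ)] <;> congr 1 <;>
    simp_all [substVar]

end ILForm

theorem ILEquiv.replL {Ax : Set ILForm} {ps : List (ILForm × ILForm)}
    (hps : ∀ pq ∈ ps, ILEquiv Ax pq.1 pq.2) (f : ILForm) : ILEquiv Ax f (ILForm.replL ps f) := by
  have of_hit : ∀ {f d : ILForm}, ILEquiv Ax f d → ILEquiv Ax f ((ILForm.hit ps f).getD d) := by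
    intro f d hd
    cases h : ILForm.hit ps f with
    | none => exact hd
    | some q => exact hps _ (ILForm.mem_of_hit_eq_some h)
  induction f with
  | var n => exact of_hit (.refl _)
  | bot => exact of_hit (.refl _)
  | impl a b iha ihb => exact of_hit (.impl_congr iha ihb)
  | box a iha => exact of_hit (.box_congr iha)
  | rhd a b iha ihb => exact of_hit (.rhd_congr iha ihb)

theorem Rser_two_mul_add_one (k : ℕ) : Rser (2*k+1) =
    ILForm.replL
      [ (∼(Av k ▷ (∼(Cv k))), (∼(Av k ▷ (∼(Cv k)))) ⋀ (Ev (k+1) ▷ (◇(Av (k+1))))),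
        ((Bv k) ⋀ (□(Cv k)), ((Bv k) ⋀ (□(Cv k))) ⋀ (Ev (k+1) ▷ Av (k+1))) ]
      (Rser (2*k)) := by
  rw [Rser, if_pos (by omega), show 2*k/2 = k by omega]

theorem Rser_two_mul_add_two (k : ℕ) : Rser (2*k+2) =
    ILForm.replL
      [ (Bv k, (Bv k) ⋀ (Av (k+1) ▷ Bv (k+1))),
        (◇(Av (k+1)), ∼(Av (k+1) ▷ (∼(Cv (k+1))))),
        (Ev (k+1) ▷ Av (k+1),
          (Ev (k+1) ▷ Av (k+1)) ⋀ (Ev (k+1) ▷ ((Bv (k+1)) ⋀ (□(Cv (k+1)))))) ]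
      (Rser (2*k+1)) := by
  rw [Rser, if_neg (by omega), show (2*k+1)/2 = k by omega]

theorem substVar_Rser {σ : ℕ → ILForm} (m : ℕ)
    (hA : ∀ j, (Av j).substVar σ = Av j) (hE : ∀ j, (Ev j).substVar σ = Ev j)
    (hB : ∀ j ≤ m / 2, (Bv j).substVar σ = Bv j) (hC : ∀ j ≤ m / 2, (Cv j).substVar σ = Cv j) :
    (Rser m).substVar σ = Rser m := by
  induction m with
  | zero =>
    simp [Rser, ILForm.substVar, ILForm.conj, ILForm.neg, hA, hB, hC]
  | succ m ih =>
    have hrec := ih (fun j hj => hB j (by omega)) (fun j hj => hC j (by omega))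
    obtain ⟨k, rfl | rfl⟩ := Nat.even_or_odd' m
    · rw [Rser_two_mul_add_one, ILForm.substVar_replL hrec]
      simp [ILForm.substVar, ILForm.conj, ILForm.neg, ILForm.dia, hA, hE, hB k (by omega),
        hC k (by omega)]
    · show (Rser (2*k+2)).substVar σ = Rser (2*k+2)
      rw [Rser_two_mul_add_two, ILForm.substVar_replL hrec]
      simp [ILForm.substVar, ILForm.conj, ILForm.neg, ILForm.dia, hA, hE, hB k (by omega),
        hB (k+1) (by omega), hC (k+1) (by omega)]

/-- The substitution `B_{n+1} := A_{n+1}`, `C_{n+1} := ⊤` (`Bv k`, `Cv k` are the variables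
`4k+1`, `4k+2`). -/
def collapseBC (n : ℕ) (v : ℕ) : ILForm :=
  if v = 4*(n+1)+1 then Av (n+1) else if v = 4*(n+1)+2 then ILForm.top else .var v

theorem substVar_collapseBC_Av (n j : ℕ) : (Av j).substVar (collapseBC n) = Av j := by
  rw [Av, ILForm.substVar, collapseBC, if_neg (by omega), if_neg (by omega)]

theorem substVar_collapseBC_Ev (n j : ℕ) : (Ev j).substVar (collapseBC n) = Ev j := by
  rw [Ev, ILForm.substVar, collapseBC, if_neg (by omega), if_neg (by omega)]

theorem substVar_collapseBC_Bv {j n : ℕ} (hj : j ≤ n) : (Bv j).substVar (collapseBC n) = Bv j := by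
  rw [Bv, ILForm.substVar, collapseBC, if_neg (by omega), if_neg (by omega)]

theorem substVar_collapseBC_Cv {j n : ℕ} (hj : j ≤ n) : (Cv j).substVar (collapseBC n) = Cv j := by
  rw [Cv, ILForm.substVar, collapseBC, if_neg (by omega), if_neg (by omega)]

theorem substVar_collapseBC_Bv_succ (n : ℕ) : (Bv (n+1)).substVar (collapseBC n) = Av (n+1) := by
  rw [Bv, ILForm.substVar, collapseBC, if_pos rfl]

theorem substVar_collapseBC_Cv_succ (n : ℕ) : (Cv (n+1)).substVar (collapseBC n) = ILForm.top := by
  rw [Cv, ILForm.substVar, collapseBC, if_neg (by omega), if_pos rfl]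

theorem substVar_collapseBC_Rser (n : ℕ) :
    (Rser (2*n+2)).substVar (collapseBC n) =
      ILForm.replL
        [ (Bv n, (Bv n) ⋀ (Av (n+1) ▷ Av (n+1))),
          (◇(Av (n+1)), ∼(Av (n+1) ▷ (∼ILForm.top))),
          (Ev (n+1) ▷ Av (n+1),
            (Ev (n+1) ▷ Av (n+1)) ⋀ (Ev (n+1) ▷ ((Av (n+1)) ⋀ (□ILForm.top)))) ]
        (Rser (2*n+1)) := by
  have hfix : (Rser (2*n+1)).substVar (collapseBC n) = Rser (2*n+1) :=
    substVar_Rser _ (substVar_collapseBC_Av n) (substVar_collapseBC_Ev n)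
      (fun _ _ => substVar_collapseBC_Bv (by omega)) (fun _ _ => substVar_collapseBC_Cv (by omega))
  rw [Rser_two_mul_add_two, ILForm.substVar_replL hfix]
  simp [ILForm.substVar, ILForm.conj, ILForm.neg, ILForm.dia, substVar_collapseBC_Av,
    substVar_collapseBC_Ev, substVar_collapseBC_Bv_succ, substVar_collapseBC_Cv_succ,
    substVar_collapseBC_Bv le_rfl]

theorem stmt1 : ∀ n : ℕ, ILProv (instancesOf (Rser (2*n+2))) (Rser (2*n+1)) := by
  intro n
  have hinst : ILProv (instancesOf (Rser (2*n+2))) ((Rser (2*n+2)).substVar (collapseBC n)) :=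
    .ax ⟨_, rfl⟩
  rw [substVar_collapseBC_Rser] at hinst
  refine (ILEquiv.replL ?_ _).2.mp hinst
  simp only [List.mem_cons, List.not_mem_nil, or_false]
  rintro pq (rfl | rfl | rfl)
  · exact .and_right_of_prov (.rhd_refl _)
  · exact .dia_rhd_neg_top _
  · exact .and_right_of_imp (.rhd_mono_right (ILEquiv.and_right_of_prov (.nec .top)).1)
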